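/- Let Ω₁, Ω₂ be probability spaces with product Ω = Ω₁ × Ω₂, let φ : Ω₁ → ℂ be integrable, let C ⊆ Ω₁ be a measurable event with P₁(C) > 0, and suppose there are constants c ≥ 1 and θ ∈ [0, 2π/3) such that: (i) φ(u) ≠ 0 for all u ∈ C and the angle between φ(u₁), φ(u₂) is at most θ for all u₁, u₂ ∈ C; (ii) |φ(u₂)| ≤ c·|φ(u₁)| for all u₁ ∈ C and u₂ ∈ Ω₁. Then ∫_{Ω₁∖C} |φ| dP₁ ≤ (c · P₁(Ω₁∖C) / P₁(C)) · (1/cos(θ/2)) · |∫_C φ dP₁|. -/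

import Mathlib

/-! The values of `φ` on `C` have pairwise angles at most `θ`; since `2θ < 2π - θ`, no pair can
wrap around the circle, so their arguments (measured from one of them) lie in an interval of
length `θ`. Rotating its midpoint onto the positive real axis gives a unit `ζ` with
`cos (θ/2) |φ| ≤ Re (φ ζ)` on `C`, hence `cos (θ/2) ∫_C |φ| ≤ |∫_C φ|`. Integrating the domination
`|φ u₂| ≤ c |φ u₁|` over `u₂ ∈ Cᶜ` and then over `u₁ ∈ C` gives
`P₁(C) ∫_{Cᶜ} |φ| ≤ c P₁(Cᶜ) ∫_C |φ|`. -/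
open MeasureTheory

/-- The angle between two complex numbers viewed as vectors in ℝ² = ℂ. -/
noncomputable def cangle (u v : ℂ) : ℝ :=
  Real.arccos ((u * starRingEnd ℂ v).re / (‖u‖ * ‖v‖))

open InnerProductGeometry Real

lemma cangle_eq_angle (u v : ℂ) : cangle u v = angle u v := by
  rw [angle_comm, angle, Complex.inner, cangle, mul_comm ‖v‖]

lemma abs_le_of_cos_le_cos {x θ : ℝ} (hθ : 0 ≤ θ) (hx : |x| < 2 * π - θ)
    (hcos : cos θ ≤ cos x) : |x| ≤ θ := by
  rw [← cos_abs x] at hcos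
  by_contra! hlt
  rcases le_or_gt |x| π with hle | hgt
  · exact (cos_lt_cos_of_nonneg_of_le_pi hθ hle hlt).not_ge hcos
  · rw [← cos_two_pi_sub |x|] at hcos
    exact (cos_lt_cos_of_nonneg_of_le_pi hθ (by linarith) (by linarith)).not_ge hcos

lemma exists_forall_abs_sub_le_half {S : Set ℝ} {d : ℝ} (h : ∀ x ∈ S, ∀ y ∈ S, x - y ≤ d) :
    ∃ m, ∀ x ∈ S, |x - m| ≤ d / 2 := by
  rcases S.eq_empty_or_nonempty with rfl | ⟨x₀, hx₀⟩
  · exact ⟨0, by simp⟩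
  have hne : S.Nonempty := ⟨x₀, hx₀⟩
  have hbdd_above : BddAbove S := ⟨x₀ + d, fun x hx => by linarith [h x hx x₀ hx₀]⟩
  have hbdd_below : BddBelow S := ⟨x₀ - d, fun x hx => by linarith [h x₀ hx₀ x hx]⟩
  have hdiam : sSup S ≤ sInf S + d :=
    csSup_le hne fun x hx => by
      linarith [le_csInf hne fun y hy => show x - d ≤ y by linarith [h x hx y hy]]
  refine ⟨(sInf S + sSup S) / 2, fun x hx => abs_le.mpr ⟨?_, ?_⟩⟩ <;>
    linarith [csInf_le hbdd_below hx, le_csSup hbdd_above hx]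

namespace Complex

lemma cos_arg_div_sub_arg_div {w v w₀ : ℂ} (hw : w ≠ 0) (hv : v ≠ 0) (hw₀ : w₀ ≠ 0) :
    Real.cos (arg (w / w₀) - arg (v / w₀)) = Real.cos (angle w v) := by
  rw [angle_eq_abs_arg hw hv, Real.cos_abs, ← Real.Angle.cos_coe, ← Real.Angle.cos_coe,
    Real.Angle.coe_sub, ← arg_div_coe_angle (div_ne_zero hw hw₀) (div_ne_zero hv hw₀),
    div_div_div_cancel_right₀ hw₀]

lemma re_mul_norm_div_mul_exp_neg (w w₀ : ℂ) (hw₀ : w₀ ≠ 0) (m : ℝ) :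
    (w * (‖w₀‖ / w₀ * exp (-(m * I)))).re = ‖w‖ * Real.cos (arg (w / w₀) - m) := by
  have hpolar : w * (‖w₀‖ / w₀ * exp (-(m * I))) = ‖w‖ * exp (↑(arg (w / w₀) - m) * I) := by
    conv_lhs => rw [← div_mul_cancel₀ w hw₀, ← norm_mul_exp_arg_mul_I (w / w₀)]
    rw [norm_div]
    push_cast
    rw [sub_mul, exp_sub, exp_neg]
    have hnorm : (‖w₀‖ : ℂ) ≠ 0 := by simpa using hw₀
    field_simp
  rw [hpolar, re_ofReal_mul, exp_ofReal_mul_I_re]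

theorem exists_norm_eq_one_forall_cos_mul_norm_le_re {S : Set ℂ} {θ : ℝ}
    (hS : ∀ w ∈ S, w ≠ 0) (hθ0 : 0 ≤ θ) (hθ : θ < 2 * π / 3)
    (hangle : ∀ w ∈ S, ∀ v ∈ S, angle w v ≤ θ) :
    ∃ ζ : ℂ, ‖ζ‖ = 1 ∧ ∀ w ∈ S, Real.cos (θ / 2) * ‖w‖ ≤ (w * ζ).re := by
  rcases S.eq_empty_or_nonempty with rfl | ⟨w₀, hw₀S⟩
  · exact ⟨1, by simp⟩
  have hw₀ := hS w₀ hw₀S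
  have harg (w) (hw : w ∈ S) : |arg (w / w₀)| ≤ θ :=
    angle_eq_abs_arg (hS w hw) hw₀ ▸ hangle w hw w₀ hw₀S
  have hpair : ∀ w ∈ arg '' ((· / w₀) '' S), ∀ v ∈ arg '' ((· / w₀) '' S), w - v ≤ θ := by
    rintro _ ⟨_, ⟨w, hw, rfl⟩, rfl⟩ _ ⟨_, ⟨v, hv, rfl⟩, rfl⟩
    refine (le_abs_self _).trans (abs_le_of_cos_le_cos hθ0 ?_ ?_)
    · linarith [abs_sub (arg (w / w₀)) (arg (v / w₀)), harg w hw, harg v hv]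
    · rw [cos_arg_div_sub_arg_div (hS w hw) (hS v hv) hw₀]
      exact Real.cos_le_cos_of_nonneg_of_le_pi (angle_nonneg w v) (by linarith [pi_pos])
        (hangle w hw v hv)
  obtain ⟨m, hm⟩ := exists_forall_abs_sub_le_half hpair
  refine ⟨‖w₀‖ / w₀ * exp (-(m * I)), ?_, fun w hw => ?_⟩
  · rw [norm_mul, norm_div, ← neg_mul, ← ofReal_neg, norm_exp_ofReal_mul_I]
    simp [hw₀]
  · rw [re_mul_norm_div_mul_exp_neg w w₀ hw₀ m, mul_comm, ← Real.cos_abs (arg _ - m)]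
    gcongr
    exact Real.cos_le_cos_of_nonneg_of_le_pi (abs_nonneg _) (by linarith [pi_pos])
      (hm _ ⟨_, ⟨w, hw, rfl⟩, rfl⟩)

end Complex

section Integral

variable {α : Type*} [MeasurableSpace α]

lemma mul_integral_norm_le_norm_integral {μ : Measure α} {φ : α → ℂ} (hφ : Integrable φ μ)
    {ζ : ℂ} (hζ : ‖ζ‖ = 1) {a : ℝ} (h : ∀ᵐ x ∂μ, a * ‖φ x‖ ≤ (φ x * ζ).re) :
    a * ∫ x, ‖φ x‖ ∂μ ≤ ‖∫ x, φ x ∂μ‖ :=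
  calc a * ∫ x, ‖φ x‖ ∂μ = ∫ x, a * ‖φ x‖ ∂μ := (integral_const_mul a _).symm
    _ ≤ ∫ x, (φ x * ζ).re ∂μ := integral_mono_ae (hφ.norm.const_mul a) (hφ.mul_const ζ).re h
    _ = ((∫ x, φ x ∂μ) * ζ).re := by
      rw [← integral_mul_const]; exact integral_re (hφ.mul_const ζ)
    _ ≤ ‖∫ x, φ x ∂μ‖ := by simpa [hζ] using Complex.re_le_norm ((∫ x, φ x ∂μ) * ζ)

lemma measureReal_mul_setIntegral_le {μ : Measure α} [IsFiniteMeasure μ] {f : α → ℝ}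
    (hf : Integrable f μ) {A B : Set α} (hA : MeasurableSet A) (hB : MeasurableSet B) {c : ℝ}
    (hdom : ∀ x ∈ A, ∀ y ∈ B, f y ≤ c * f x) :
    μ.real A * ∫ y in B, f y ∂μ ≤ c * μ.real B * ∫ x in A, f x ∂μ := by
  have hB_le (x) (hx : x ∈ A) : ∫ y in B, f y ∂μ ≤ c * μ.real B * f x := by
    refine (setIntegral_mono_on hf.integrableOn integrableOn_const hB (hdom x hx)).trans_eq ?_
    rw [setIntegral_const, smul_eq_mul]
    ring
  simpa [integral_const_mul] using
    setIntegral_mono_on integrableOn_const (hf.const_mul _).integrableOn hA hB_le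

end Integral

theorem stmt_14_general {Ω₁ : Type*} [MeasurableSpace Ω₁]
    (P₁ : Measure Ω₁)
    [IsProbabilityMeasure P₁]
    (φ : Ω₁ → ℂ) (hφ : Integrable φ P₁)
    (C : Set Ω₁) (hC : MeasurableSet C) (hCpos : 0 < P₁ C)
    (c : ℝ) (hc : 1 ≤ c) (θ : ℝ) (hθ0 : 0 ≤ θ) (hθ : θ < 2 * Real.pi / 3)
    (hne : ∀ u ∈ C, φ u ≠ 0)
    (hangle : ∀ u₁ ∈ C, ∀ u₂ ∈ C, cangle (φ u₁) (φ u₂) ≤ θ)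
    (hdom : ∀ u₁ ∈ C, ∀ u₂, ‖φ u₂‖ ≤ c * ‖φ u₁‖) :
    ∫ u in Cᶜ, ‖φ u‖ ∂P₁ ≤
      (c * (P₁ Cᶜ).toReal / (P₁ C).toReal) * (1 / Real.cos (θ / 2)) *
        ‖∫ u in C, φ u ∂P₁‖ := by
  obtain ⟨ζ, hζ, hsector⟩ := Complex.exists_norm_eq_one_forall_cos_mul_norm_le_re (S := φ '' C)
    (by rintro _ ⟨u, hu, rfl⟩; exact hne u hu) hθ0 hθ
    (by rintro _ ⟨u, hu, rfl⟩ _ ⟨v, hv, rfl⟩; exact cangle_eq_angle _ _ ▸ hangle u hu v hv)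
  have hC_int : cos (θ / 2) * ∫ u in C, ‖φ u‖ ∂P₁ ≤ ‖∫ u in C, φ u ∂P₁‖ :=
    mul_integral_norm_le_norm_integral hφ.integrableOn hζ
      ((ae_restrict_iff' hC).2 (ae_of_all _ fun u hu => hsector _ ⟨u, hu, rfl⟩))
  have hCc_int : P₁.real C * ∫ u in Cᶜ, ‖φ u‖ ∂P₁ ≤ c * P₁.real Cᶜ * ∫ u in C, ‖φ u‖ ∂P₁ :=
    measureReal_mul_setIntegral_le hφ.norm hC hC.compl fun u₁ h₁ u₂ _ => hdom u₁ h₁ u₂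
  have hPC : 0 < P₁.real C := ENNReal.toReal_pos hCpos.ne' (measure_ne_top _ _)
  have hcos : 0 < cos (θ / 2) := cos_pos_of_mem_Ioo ⟨by linarith [pi_pos], by linarith [pi_pos]⟩
  calc ∫ u in Cᶜ, ‖φ u‖ ∂P₁ ≤ c * P₁.real Cᶜ / P₁.real C * ∫ u in C, ‖φ u‖ ∂P₁ := by
        rw [div_mul_eq_mul_div, le_div_iff₀ hPC]; linarith
    _ ≤ c * P₁.real Cᶜ / P₁.real C * (1 / cos (θ / 2) * ‖∫ u in C, φ u ∂P₁‖) := by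
        gcongr
        rw [one_div_mul_eq_div, le_div_iff₀ hcos]; linarith
    _ = _ := by rw [mul_assoc]; rfl

theorem stmt_14 {Ω₁ Ω₂ : Type*} [MeasurableSpace Ω₁] [MeasurableSpace Ω₂]
    (P₁ : Measure Ω₁) (P₂ : Measure Ω₂)
    [IsProbabilityMeasure P₁] [IsProbabilityMeasure P₂]
    (φ : Ω₁ → ℂ) (hφ : Integrable φ P₁)
    (C : Set Ω₁) (hC : MeasurableSet C) (hCpos : 0 < P₁ C)
    (c : ℝ) (hc : 1 ≤ c) (θ : ℝ) (hθ0 : 0 ≤ θ) (hθ : θ < 2 * Real.pi / 3)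
    (hne : ∀ u ∈ C, φ u ≠ 0)
    (hangle : ∀ u₁ ∈ C, ∀ u₂ ∈ C, cangle (φ u₁) (φ u₂) ≤ θ)
    (hdom : ∀ u₁ ∈ C, ∀ u₂, ‖φ u₂‖ ≤ c * ‖φ u₁‖) :
    ∫ u in Cᶜ, ‖φ u‖ ∂P₁ ≤
      (c * (P₁ Cᶜ).toReal / (P₁ C).toReal) * (1 / Real.cos (θ / 2)) *
        ‖∫ u in C, φ u ∂P₁‖ :=
  stmt_14_general P₁ φ hφ C hC hCpos c hc θ hθ0 hθ hne hangle hdom
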